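/- For every $k\in\{1,\dots,m\}$ one has $\textstyle\int_\mathbf{i}\big(\varphi_\mathbf{i}(\varepsilon_k)\big)=-\varepsilon_k-\sum_{\ell=1}^{k-1} a_{i_\ell i_k}\varepsilon_\ell$. -/

import Mathlib

open Finset

/-- The weight lattice `𝒫`: the free abelian group with basis `{αᵢ, ωᵢ : i ∈ I}`,
represented by pairs of coefficient vectors (first component: coefficients of the `αᵢ`,
second component: coefficients of the `ωᵢ`). -/
abbrev PLat (n : ℕ) := (Fin n → ℤ) × (Fin n → ℤ)

/-- The coroot lattice `𝒬^∨`: the free abelian group with basis `{αᵢ^∨ : i ∈ I}`,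
represented by coefficient vectors. -/
abbrev QvLat (n : ℕ) := Fin n → ℤ

variable {n : ℕ}

/-- The basis element `α_j^∨` of `𝒬^∨`. -/
def coroot (j : Fin n) : QvLat n := fun k => if k = j then 1 else 0

/-- The basis element `α_j` of `𝒫`. -/
def alP (j : Fin n) : PLat n := (fun k => if k = j then 1 else 0, 0)

/-- The basis element `ω_j` of `𝒫`. -/
def omP (j : Fin n) : PLat n := (0, fun k => if k = j then 1 else 0)

/-- The biadditive pairing `𝒬^∨ × 𝒫 → ℤ` with `(αᵢ^∨, α_j) = a_{ij}` and
`(αᵢ^∨, ω_j) = δ_{ij}`. -/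
def pairQP (A : Fin n → Fin n → ℤ) (x : QvLat n) (lam : PLat n) : ℤ :=
  (∑ a, ∑ b, x a * A a b * lam.1 b) + ∑ a, x a * lam.2 a

/-- The simple reflection `sᵢ` on `𝒫`: `sᵢ α_j = α_j - a_{ij} αᵢ`,
`sᵢ ω_j = ω_j - δ_{ij} αᵢ`. -/
def sP (A : Fin n → Fin n → ℤ) (a : Fin n) (lam : PLat n) : PLat n :=
  (fun j => if j = a then lam.1 a - ((∑ k, A a k * lam.1 k) + lam.2 a) else lam.1 j,
   lam.2)

/-- The simple reflection `sᵢ^∨` on `𝒬^∨`: `sᵢ^∨ α_j^∨ = α_j^∨ - a_{ji} αᵢ^∨`. -/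
def sQ (A : Fin n → Fin n → ℤ) (a : Fin n) (x : QvLat n) : QvLat n :=
  fun j => if j = a then x a - ∑ k, A k a * x k else x j

/-- `w_ℓ = s_{i₁} ∘ ⋯ ∘ s_{i_ℓ}` on `𝒫` (with `w₀ = id`). -/
def wP (A : Fin n → Fin n → ℤ) (ii : ℕ → Fin n) : ℕ → PLat n → PLat n
  | 0 => id
  | (l+1) => wP A ii l ∘ sP A (ii (l+1))

/-- `w_ℓ^∨ = s_{i₁}^∨ ∘ ⋯ ∘ s_{i_ℓ}^∨` on `𝒬^∨` (with `w₀ = id`). -/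
def wQ (A : Fin n → Fin n → ℤ) (ii : ℕ → Fin n) : ℕ → QvLat n → QvLat n
  | 0 => id
  | (l+1) => wQ A ii l ∘ sQ A (ii (l+1))

/-- `k⁺ = min({ℓ : k < ℓ ≤ m, i_ℓ = i_k} ∪ {m+1})`. -/
noncomputable def kplus (ii : ℕ → Fin n) (m k : ℕ) : ℕ :=
  sInf ({l | k < l ∧ l ≤ m ∧ ii l = ii k} ∪ {m+1})

/-- `k⁻ = max({ℓ : 1 ≤ ℓ < k, i_ℓ = i_k} ∪ {0})`. -/
noncomputable def kminus (ii : ℕ → Fin n) (k : ℕ) : ℕ :=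
  sSup ({l | 1 ≤ l ∧ l < k ∧ ii l = ii k} ∪ {0})

/-- The standard basis vector `ε_k` of `ℤ^m` (1-based index), with the convention
`ε_s = 0` for `s ∉ {1,…,m}`. -/
def eps (m k : ℕ) : Fin m → ℤ := fun j => if (j : ℕ) + 1 = k then 1 else 0

/-- `φ_𝐢(ε_k) = -ε_k - ε_{k⁻} - ∑_{ℓ : ℓ < k < ℓ⁺} a_{i_ℓ i_k} ε_ℓ`. -/
noncomputable def phiE (A : Fin n → Fin n → ℤ) (ii : ℕ → Fin n) (m k : ℕ) :
    Fin m → ℤ :=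
  -(eps m k) - eps m (kminus ii k)
    - ∑ l : Fin m, (if (l:ℕ)+1 < k ∧ k < kplus ii m ((l:ℕ)+1)
        then A (ii ((l:ℕ)+1)) (ii k) else 0) • eps m ((l:ℕ)+1)

/-- The endomorphism `φ_𝐢` of `ℤ^m`, extended additively from its values on the basis. -/
noncomputable def phiMap (A : Fin n → Fin n → ℤ) (ii : ℕ → Fin n) (m : ℕ)
    (v : Fin m → ℤ) : Fin m → ℤ :=
  ∑ k : Fin m, v k • phiE A ii m ((k:ℕ)+1)

/-- `φ'_𝐢(ε_ℓ) = -∑_{k=1}^{ℓ} (w_k^∨ α_{i_k}^∨, w_ℓ ω_{i_ℓ}) ε_k`. -/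
def phiE' (A : Fin n → Fin n → ℤ) (ii : ℕ → Fin n) (m l : ℕ) : Fin m → ℤ :=
  -∑ k : Fin m, (if (k:ℕ)+1 ≤ l then
      pairQP A (wQ A ii ((k:ℕ)+1) (coroot (ii ((k:ℕ)+1)))) (wP A ii l (omP (ii l)))
    else 0) • eps m ((k:ℕ)+1)

/-- The endomorphism `φ'_𝐢` of `ℤ^m`, extended additively from its values on the basis. -/
def phiMap' (A : Fin n → Fin n → ℤ) (ii : ℕ → Fin n) (m : ℕ)
    (v : Fin m → ℤ) : Fin m → ℤ :=
  ∑ l : Fin m, v l • phiE' A ii m ((l:ℕ)+1)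

/-- `∂_𝐢 ε_k = ε_k - ε_{k⁻}`. -/
noncomputable def derE (ii : ℕ → Fin n) (m k : ℕ) : Fin m → ℤ :=
  eps m k - eps m (kminus ii k)

/-- The endomorphism `∂_𝐢` of `ℤ^m`. -/
noncomputable def derMap (ii : ℕ → Fin n) (m : ℕ) (v : Fin m → ℤ) : Fin m → ℤ :=
  ∑ k : Fin m, v k • derE ii m ((k:ℕ)+1)

/-- `∫_𝐢 ε_k = ε_k + ε_{k⁻} + ε_{(k⁻)⁻} + ⋯` (summing along the chain `k > k⁻ > ⋯ > 0`). -/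
noncomputable def intE (ii : ℕ → Fin n) (m : ℕ) (k : ℕ) : Fin m → ℤ :=
  if h : kminus ii k < k then eps m k + intE ii m (kminus ii k) else eps m k
termination_by k
decreasing_by exact h

/-- The endomorphism `∫_𝐢` of `ℤ^m`. -/
noncomputable def intMap (ii : ℕ → Fin n) (m : ℕ) (v : Fin m → ℤ) : Fin m → ℤ :=
  ∑ k : Fin m, v k • intE ii m ((k:ℕ)+1)

/-- The skew-symmetric biadditive form `Λ_𝐢` on `ℤ^m` with
`Λ_𝐢(ε_k, ε_ℓ) = sgn(k-ℓ) c_{i_k i_ℓ}` where `c_{ij} = dᵢ a_{ij}`. -/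
def LamF (A : Fin n → Fin n → ℤ) (d : Fin n → ℤ) (ii : ℕ → Fin n) (m : ℕ)
    (a b : Fin m → ℤ) : ℤ :=
  ∑ k : Fin m, ∑ l : Fin m, a k * b l *
    ((((k:ℕ):ℤ) - ((l:ℕ):ℤ)).sign *
      (d (ii ((k:ℕ)+1)) * A (ii ((k:ℕ)+1)) (ii ((l:ℕ)+1))))

/-- The biadditive form `Φ_𝐢` on `ℤ^m` with `Φ_𝐢(ε_k,ε_ℓ) = -d_{i_k}` if `k = ℓ`,
`= -c_{i_ℓ i_k}` if `ℓ < k`, and `= 0` if `ℓ > k`. -/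
def PhiF (A : Fin n → Fin n → ℤ) (d : Fin n → ℤ) (ii : ℕ → Fin n) (m : ℕ)
    (a b : Fin m → ℤ) : ℤ :=
  ∑ k : Fin m, ∑ l : Fin m, a k * b l *
    (if (k:ℕ) = (l:ℕ) then -(d (ii ((k:ℕ)+1)))
     else if (l:ℕ) < (k:ℕ) then
       -(d (ii ((l:ℕ)+1)) * A (ii ((l:ℕ)+1)) (ii ((k:ℕ)+1)))
     else 0)

/-- The entry `b_{pk}` of the exchange matrix `B̃_𝐢`. -/
noncomputable def bcoef (A : Fin n → Fin n → ℤ) (ii : ℕ → Fin n) (m p k : ℕ) : ℤ :=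
  if p = kminus ii k then -1
  else if p < k ∧ k < kplus ii m p ∧ kplus ii m p < kplus ii m k then
    -(A (ii p) (ii k))
  else if k < p ∧ p < kplus ii m k ∧ kplus ii m k < kplus ii m p then
    A (ii p) (ii k)
  else if p = kplus ii m k then 1
  else 0

/-- The column `𝐛^k = ∑_p b_{pk} ε_p ∈ ℤ^m` of the exchange matrix. -/
noncomputable def bvec (A : Fin n → Fin n → ℤ) (ii : ℕ → Fin n) (m k : ℕ) :
    Fin m → ℤ :=
  fun p => bcoef A ii m ((p:ℕ)+1) k

/-- `ρ_𝐢⁺(ε_k) = ε_k + ∑_{ℓ<k, ℓ⁺=m+1} a_{i_ℓ i_k} ε_ℓ`. -/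
noncomputable def rhoPE (A : Fin n → Fin n → ℤ) (ii : ℕ → Fin n) (m k : ℕ) :
    Fin m → ℤ :=
  eps m k + ∑ l : Fin m, (if (l:ℕ)+1 < k ∧ kplus ii m ((l:ℕ)+1) = m+1
      then A (ii ((l:ℕ)+1)) (ii k) else 0) • eps m ((l:ℕ)+1)

/-- `ρ_𝐢⁻(ε_k) = ε_k - ∑_{ℓ≤k, ℓ⁺=m+1} a_{i_ℓ i_k} ε_ℓ`. -/
noncomputable def rhoME (A : Fin n → Fin n → ℤ) (ii : ℕ → Fin n) (m k : ℕ) :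
    Fin m → ℤ :=
  eps m k - ∑ l : Fin m, (if (l:ℕ)+1 ≤ k ∧ kplus ii m ((l:ℕ)+1) = m+1
      then A (ii ((l:ℕ)+1)) (ii k) else 0) • eps m ((l:ℕ)+1)

/-- The endomorphism `ρ_𝐢⁺` of `ℤ^m`. -/
noncomputable def rhoPMap (A : Fin n → Fin n → ℤ) (ii : ℕ → Fin n) (m : ℕ)
    (v : Fin m → ℤ) : Fin m → ℤ :=
  ∑ k : Fin m, v k • rhoPE A ii m ((k:ℕ)+1)

/-- The endomorphism `ρ_𝐢⁻` of `ℤ^m`. -/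
noncomputable def rhoMMap (A : Fin n → Fin n → ℤ) (ii : ℕ → Fin n) (m : ℕ)
    (v : Fin m → ℤ) : Fin m → ℤ :=
  ∑ k : Fin m, v k • rhoME A ii m ((k:ℕ)+1)

/-- `𝐚_λ = -∑_{k=1}^m (w_k^∨ α_{i_k}^∨, w_m λ) ε_k ∈ ℤ^m`. -/
def avec (A : Fin n → Fin n → ℤ) (ii : ℕ → Fin n) (m : ℕ) (lam : PLat n) :
    Fin m → ℤ :=
  fun k => -(pairQP A (wQ A ii ((k:ℕ)+1) (coroot (ii ((k:ℕ)+1)))) (wP A ii m lam))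

/-- `|𝐚| = ∑_{k=1}^m a_k α_{i_k} ∈ 𝒬 ⊆ 𝒫`. -/
def degP (ii : ℕ → Fin n) (m : ℕ) (a : Fin m → ℤ) : PLat n :=
  (fun j => ∑ k : Fin m, if ii ((k:ℕ)+1) = j then a k else 0, 0)

/-- The pairing `(μ, λ) = ∑ mᵢ dᵢ (αᵢ^∨, λ)` for `μ = ∑ mᵢ αᵢ ∈ 𝒬` and `λ ∈ 𝒫`
(induced by identifying `αᵢ` with `dᵢ αᵢ^∨`). -/
def pairAl (A : Fin n → Fin n → ℤ) (d : Fin n → ℤ) (mu lam : PLat n) : ℤ :=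
  ∑ j, mu.1 j * (d j * pairQP A (coroot j) lam)

/-!
`∫_𝐢 ε_t` is the sum of the `ε_p` with `p ≤ t` and `i_p = i_t`. Hence `∫_𝐢 ε_k + ∫_𝐢 ε_{k⁻}`
is `ε_k` plus twice every earlier `ε_p` of colour `i_k`, and `2 = a_{i_k i_k}`. For `p < k` of
another colour, exactly one `ℓ` with `ℓ < k < ℓ⁺` has `∫_𝐢 ε_ℓ` containing `ε_p`: the last
occurrence of the colour `i_p` before `k`. It contributes `a_{i_p i_k} ε_p`.
-/

section Occurrences

variable (ii : ℕ → Fin n)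

lemma bddAbove_kminus_set (k : ℕ) :
    BddAbove ({l | 1 ≤ l ∧ l < k ∧ ii l = ii k} ∪ {0} : Set ℕ) :=
  ⟨k, by rintro x (⟨-, hx, -⟩ | rfl) <;> omega⟩

lemma kminus_eq_zero_or (k : ℕ) :
    kminus ii k = 0 ∨ 1 ≤ kminus ii k ∧ kminus ii k < k ∧ ii (kminus ii k) = ii k :=
  (Nat.sSup_mem ⟨0, Or.inr rfl⟩ (bddAbove_kminus_set ii k)).symm

lemma le_kminus {k l : ℕ} (h1 : 1 ≤ l) (h2 : l < k) (h3 : ii l = ii k) :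
    l ≤ kminus ii k :=
  le_csSup (bddAbove_kminus_set ii k) (Or.inl ⟨h1, h2, h3⟩)

lemma kminus_lt {k : ℕ} (hk : 1 ≤ k) : kminus ii k < k := by
  rcases kminus_eq_zero_or ii k with h | h <;> omega

lemma le_kminus_and_eq_iff {k p : ℕ} (hp : 1 ≤ p) :
    p ≤ kminus ii k ∧ ii p = ii (kminus ii k) ↔ p < k ∧ ii p = ii k := by
  rcases kminus_eq_zero_or ii k with h0 | ⟨-, hlt, hcol⟩
  · rw [h0]
    refine ⟨fun h => by omega, fun ⟨h1, h2⟩ => ?_⟩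
    have := le_kminus ii hp h1 h2
    omega
  · rw [hcol]
    exact ⟨fun ⟨h1, h2⟩ => ⟨by omega, h2⟩,
      fun ⟨h1, h2⟩ => ⟨le_kminus ii hp h1 h2, h2⟩⟩

variable {m : ℕ}

lemma kplus_le {t p : ℕ} (h1 : t < p) (h2 : p ≤ m) (h3 : ii p = ii t) :
    kplus ii m t ≤ p :=
  Nat.sInf_le (Or.inl ⟨h1, h2, h3⟩)

lemma lt_kplus {k t : ℕ} (hk : k ≤ m) (H : ∀ q, t < q → q ≤ k → ii q ≠ ii t) :
    k < kplus ii m t := by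
  have hne : ({l | t < l ∧ l ≤ m ∧ ii l = ii t} ∪ {m + 1} : Set ℕ).Nonempty :=
    ⟨m + 1, Or.inr rfl⟩
  rcases Nat.sInf_mem hne with ⟨h1, h2, h3⟩ | h
  · by_contra! hle
    exact H _ h1 hle h3
  · rw [kplus, h]
    omega

lemma eq_of_lt_kplus {k s t : ℕ} (hk : k ≤ m) (hs : s < k) (ht : t < k)
    (hks : k < kplus ii m s) (hkt : k < kplus ii m t) (hst : ii s = ii t) : s = t := by
  rcases lt_trichotomy s t with h | h | h
  · have := kplus_le ii (m := m) h (by omega) hst.symm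
    omega
  · exact h
  · have := kplus_le ii (m := m) h (by omega) hst
    omega

lemma exists_lt_kplus_of_lt {k p : ℕ} (hk : k ≤ m) (hp : p < k) (hcol : ii p ≠ ii k) :
    ∃ t, p ≤ t ∧ t < k ∧ ii t = ii p ∧ k < kplus ii m t := by
  set t := Nat.findGreatest (fun t => ii t = ii p) (k - 1)
  have hpt : p ≤ t := Nat.le_findGreatest (by omega) rfl
  have htk : t ≤ k - 1 := Nat.findGreatest_le (k - 1)
  have ht : ii t = ii p := Nat.findGreatest_spec (P := fun t => ii t = ii p) (by omega) rfl
  refine ⟨t, hpt, by omega, ht, lt_kplus ii hk fun q hq hqk hqt => ?_⟩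
  rcases hqk.lt_or_eq with hqk | rfl
  · exact Nat.findGreatest_is_greatest hq (by omega) (hqt.trans ht)
  · exact hcol (hqt.trans ht).symm

end Occurrences

section Vectors

variable {m : ℕ}

lemma eps_zero : eps m 0 = 0 := by
  ext j
  simp [eps]

lemma eps_eq_single {s : ℕ} (hs1 : 1 ≤ s) (hs : s ≤ m) :
    eps m s = Pi.single (⟨s - 1, by omega⟩ : Fin m) 1 := by
  ext j
  simp only [eps, Pi.single_apply, Fin.ext_iff]
  congr 1
  exact propext (by omega)

lemma linearCombination_eps {M : Type*} [AddCommGroup M] (f : ℕ → M) {s : ℕ}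
    (hs1 : 1 ≤ s) (hs : s ≤ m) :
    Fintype.linearCombination ℤ (fun l : Fin m => f ((l : ℕ) + 1)) (eps m s) = f s := by
  rw [eps_eq_single hs1 hs, Fintype.linearCombination_apply_single, one_smul,
    Nat.sub_add_cancel hs1]

lemma sum_smul_eps_apply (c : Fin m → ℤ) (p : Fin m) :
    (∑ l : Fin m, c l • eps m ((l : ℕ) + 1)) p = c p := by
  simp [Finset.sum_apply, eps, Fin.val_inj]

end Vectors

section Integration

variable (ii : ℕ → Fin n) {m : ℕ}

lemma intE_apply (t : ℕ) (p : Fin m) :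
    intE ii m t p = if (p : ℕ) + 1 ≤ t ∧ ii ((p : ℕ) + 1) = ii t then 1 else 0 := by
  induction t using Nat.strong_induction_on with
  | _ t IH =>
    rw [intE]
    by_cases ht : kminus ii t < t
    · rw [dif_pos ht, Pi.add_apply, IH _ ht, eps]
      simp only [le_kminus_and_eq_iff ii (Nat.succ_pos p)]
      by_cases hpt : (p : ℕ) + 1 = t
      · subst hpt
        simp
      · have hlt : (p : ℕ) + 1 < t ↔ (p : ℕ) + 1 ≤ t := by omega
        simp only [hpt, if_false, zero_add, hlt]
    · rw [dif_neg ht]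
      obtain rfl : t = 0 := Nat.eq_zero_of_not_pos fun h => ht (kminus_lt ii h)
      simp [eps]

lemma intMap_eq_linearCombination :
    intMap ii m = Fintype.linearCombination ℤ (fun l : Fin m => intE ii m ((l : ℕ) + 1)) :=
  rfl

lemma intMap_eps {s : ℕ} (hs : s ≤ m) : intMap ii m (eps m s) = intE ii m s := by
  rcases Nat.eq_zero_or_pos s with rfl | hs1
  · ext p
    simp [intMap_eq_linearCombination, eps_zero, intE_apply]
  · exact linearCombination_eps _ hs1 hs

lemma sum_smul_intE_apply (A : Fin n → Fin n → ℤ) {k : ℕ} (hk : k ≤ m) (p : Fin m) :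
    (∑ l : Fin m, (if (l : ℕ) + 1 < k ∧ k < kplus ii m ((l : ℕ) + 1)
        then A (ii ((l : ℕ) + 1)) (ii k) else 0) • intE ii m ((l : ℕ) + 1)) p =
      if (p : ℕ) + 1 < k ∧ ii ((p : ℕ) + 1) ≠ ii k
        then A (ii ((p : ℕ) + 1)) (ii k) else 0 := by
  simp only [Finset.sum_apply, Pi.smul_apply, smul_eq_mul, intE_apply, mul_ite, mul_one,
    mul_zero]
  split_ifs with hp
  · obtain ⟨t, hpt, htk, htc, hkt⟩ := exists_lt_kplus_of_lt ii hk hp.1 hp.2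
    rw [Finset.sum_eq_single ⟨t - 1, by omega⟩]
    · simp only [show t - 1 + 1 = t by omega]
      rw [if_pos ⟨hpt, htc.symm⟩, if_pos ⟨htk, hkt⟩, htc]
    · intro l _ hl
      rw [ite_eq_right_iff]
      rintro ⟨hpl, hcl⟩
      rw [if_neg]
      rintro ⟨hlk, hkl⟩
      have := eq_of_lt_kplus ii hk hlk htk hkl hkt (hcl.symm.trans htc.symm)
      exact hl (Fin.ext (by simp only; omega))
    · simp
  · refine Finset.sum_eq_zero fun l _ => ?_
    rw [ite_eq_right_iff]
    rintro ⟨hpl, hcl⟩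
    rw [if_neg]
    rintro ⟨hlk, hkl⟩
    have hcol : ii ((p : ℕ) + 1) = ii k := by
      by_contra h
      exact hp ⟨by omega, h⟩
    have := kplus_le ii (m := m) hlk hk (hcol.symm.trans hcl)
    omega

lemma intMap_phiE (A : Fin n → Fin n → ℤ) {k : ℕ} (hk1 : 1 ≤ k) (hk2 : k ≤ m) :
    intMap ii m (phiE A ii m k) =
      -intE ii m k - intE ii m (kminus ii k) - ∑ l : Fin m,
        (if (l : ℕ) + 1 < k ∧ k < kplus ii m ((l : ℕ) + 1)
          then A (ii ((l : ℕ) + 1)) (ii k) else 0) • intE ii m ((l : ℕ) + 1) := by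
  rw [phiE, intMap_eq_linearCombination]
  simp only [map_sub, map_neg, map_sum, map_smul]
  rw [← intMap_eq_linearCombination, intMap_eps ii hk2,
    intMap_eps ii ((kminus_lt ii hk1).le.trans hk2)]
  exact congrArg _ (Finset.sum_congr rfl fun l _ => by rw [intMap_eps ii l.isLt])

end Integration

lemma phiMap_eps (A : Fin n → Fin n → ℤ) (ii : ℕ → Fin n) {m k : ℕ} (hk1 : 1 ≤ k)
    (hk2 : k ≤ m) : phiMap A ii m (eps m k) = phiE A ii m k :=
  linearCombination_eps (phiE A ii m) hk1 hk2

theorem int_phi_eps_general {n m : ℕ}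
    (A : Fin n → Fin n → ℤ)
    (hA : ∀ i, A i i = 2)
    (ii : ℕ → Fin n) (k : ℕ) (hk1 : 1 ≤ k) (hk2 : k ≤ m) :
    intMap ii m (phiMap A ii m (eps m k)) =
      -(eps m k) - ∑ l : Fin m,
        (if (l:ℕ)+1 < k then A (ii ((l:ℕ)+1)) (ii k) else 0) • eps m ((l:ℕ)+1) := by
  rw [phiMap_eps A ii hk1 hk2, intMap_phiE ii A hk1 hk2]
  ext p
  simp only [Pi.sub_apply, Pi.neg_apply, sum_smul_intE_apply ii A hk2, sum_smul_eps_apply,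
    intE_apply, le_kminus_and_eq_iff ii (Nat.succ_pos p), eps]
  by_cases hc : ii ((p : ℕ) + 1) = ii k
  · simp only [hc, hA, ne_eq, not_true_eq_false, and_true, and_false, if_false]
    split_ifs <;> omega
  · have hpk : (p : ℕ) + 1 ≠ k := fun h => hc (congrArg ii h)
    simp [hc, hpk]

/-- `∫_𝐢 (φ_𝐢(ε_k)) = -ε_k - ∑_{ℓ=1}^{k-1} a_{i_ℓ i_k} ε_ℓ`. -/
theorem int_phi_eps {n m : ℕ} (hm : 1 ≤ m)
    (A : Fin n → Fin n → ℤ) (d : Fin n → ℤ)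
    (hA : ∀ i, A i i = 2) (hd : ∀ i, 0 < d i)
    (hsym : ∀ i j, d i * A i j = d j * A j i)
    (ii : ℕ → Fin n) (k : ℕ) (hk1 : 1 ≤ k) (hk2 : k ≤ m) :
    intMap ii m (phiMap A ii m (eps m k)) =
      -(eps m k) - ∑ l : Fin m,
        (if (l:ℕ)+1 < k then A (ii ((l:ℕ)+1)) (ii k) else 0) • eps m ((l:ℕ)+1) :=
  int_phi_eps_general A hA ii k hk1 hk2
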